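/- Suppose h is small enough that Assumption h_small holds, and define Q₁ := λδ + a(B₁K₂ + B₂K₁(1 + haK₂)) + λ̄((B₁ + hB₂K₃)(λK₂ + B₁(1 + haK₂)) + B₂K₃), Q₂ := h(a(B₁ + haB₂K₁) + λ̄(λ + haB₁)(B₁ + hB₂K₃)), Q₃ := h(λK₂ + B₁(1 + haK₂)), and μ := λ + Q₂ + h²(λ + haB₁)Q₁/(1 − Q₃), with Q₃ < 1 and μ < 1. Then the operator T satisfies ‖Tg₁ − Tg₂‖_∞ ≤ μ‖g₁ − g₂‖_∞ for all g₁, g₂ ∈ Γ(γ,δ), i.e. T is a contraction on Γ(γ,δ). -/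

import Mathlib

/-- `w_g(ξ) := λ̄ f(ξ) + h g(ξ)`. -/
noncomputable def wMap {d : ℕ}
    (f : EuclideanSpace ℝ (Fin d) → EuclideanSpace ℝ (Fin d)) (lam h : ℝ)
    (g : EuclideanSpace ℝ (Fin d) → EuclideanSpace ℝ (Fin d))
    (ξ : EuclideanSpace ℝ (Fin d)) : EuclideanSpace ℝ (Fin d) :=
  (1-lam)⁻¹ • f ξ + h • g ξ

/-- `z_g(ξ) := λ w_g(ξ) + f(ξ + h a w_g(ξ))`. -/
noncomputable def zMap {d : ℕ}
    (f : EuclideanSpace ℝ (Fin d) → EuclideanSpace ℝ (Fin d)) (lam h a : ℝ)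
    (g : EuclideanSpace ℝ (Fin d) → EuclideanSpace ℝ (Fin d))
    (ξ : EuclideanSpace ℝ (Fin d)) : EuclideanSpace ℝ (Fin d) :=
  lam • wMap f lam h g ξ + f (ξ + (h*a) • wMap f lam h g ξ)

/-- `I⁽¹⁾_g(ξ) := ∫₀¹ Df(ξ + s·h·a·w_g(ξ)) w_g(ξ) ds`. -/
noncomputable def I1 {d : ℕ}
    (f : EuclideanSpace ℝ (Fin d) → EuclideanSpace ℝ (Fin d)) (lam h a : ℝ)
    (g : EuclideanSpace ℝ (Fin d) → EuclideanSpace ℝ (Fin d))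
    (ξ : EuclideanSpace ℝ (Fin d)) : EuclideanSpace ℝ (Fin d) :=
  ∫ s in (0:ℝ)..1, fderiv ℝ f (ξ + (s*(h*a)) • wMap f lam h g ξ) (wMap f lam h g ξ)

/-- `I⁽²⁾_g(ξ) := ∫₀¹ Df(ξ + s·h·z_g(ξ)) z_g(ξ) ds`. -/
noncomputable def I2 {d : ℕ}
    (f : EuclideanSpace ℝ (Fin d) → EuclideanSpace ℝ (Fin d)) (lam h a : ℝ)
    (g : EuclideanSpace ℝ (Fin d) → EuclideanSpace ℝ (Fin d))
    (ξ : EuclideanSpace ℝ (Fin d)) : EuclideanSpace ℝ (Fin d) :=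
  ∫ s in (0:ℝ)..1, fderiv ℝ f (ξ + (s*h) • zMap f lam h a g ξ) (zMap f lam h a g ξ)

/-- Mean-value Lipschitz bound from a global bound on the derivative. -/
lemma aux_lip {E F : Type*} [NormedAddCommGroup E] [NormedSpace ℝ E]
    [NormedAddCommGroup F] [NormedSpace ℝ F]
    {g : E → F} (hg : Differentiable ℝ g) {C : ℝ} (hC : ∀ x, ‖fderiv ℝ g x‖ ≤ C)
    (x y : E) : ‖g x - g y‖ ≤ C * ‖x - y‖ :=
  Convex.norm_image_sub_le_of_norm_fderiv_le (fun z _ => hg z) (fun z _ => hC z)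
    convex_univ (Set.mem_univ y) (Set.mem_univ x)

set_option maxHeartbeats 1000000 in
/-- Key bound for differences of the parametrized integrals appearing in `I1`, `I2`. -/
lemma aux_integral_bound {d : ℕ}
    (f : EuclideanSpace ℝ (Fin d) → EuclideanSpace ℝ (Fin d))
    (hDf : Continuous (fderiv ℝ f)) {B₁ B₂ : ℝ}
    (hbd₁ : ∀ x, ‖fderiv ℝ f x‖ ≤ B₁)
    (hlipDf : ∀ x y, ‖fderiv ℝ f x - fderiv ℝ f y‖ ≤ B₂ * ‖x - y‖)
    (hB₂ : 0 ≤ B₂)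
    {c : ℝ} (hc : 0 ≤ c) (x y v u : EuclideanSpace ℝ (Fin d))
    {Mv Dxy Dvu : ℝ} (hMv : ‖v‖ ≤ Mv) (hMv0 : 0 ≤ Mv)
    (hxy : ‖x - y‖ ≤ Dxy) (hvu : ‖v - u‖ ≤ Dvu) :
    ‖(∫ s in (0:ℝ)..1, fderiv ℝ f (x + (s*c) • v) v)
      - ∫ s in (0:ℝ)..1, fderiv ℝ f (y + (s*c) • u) u‖
      ≤ B₂ * Mv * (Dxy + c * Dvu) + B₁ * Dvu := by
  have hB₁ : 0 ≤ B₁ := le_trans (norm_nonneg _) (hbd₁ x)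
  have hDvu : 0 ≤ Dvu := le_trans (norm_nonneg _) hvu
  have hcont : ∀ (z w : EuclideanSpace ℝ (Fin d)),
      Continuous fun s : ℝ => fderiv ℝ f (z + (s*c) • w) w := by
    intro z w
    have hmap : Continuous fun s : ℝ => z + (s*c) • w :=
      continuous_const.add ((continuous_id.mul continuous_const).smul continuous_const)
    exact (hDf.comp hmap).clm_apply continuous_const
  have hi1 : IntervalIntegrable (fun s : ℝ => fderiv ℝ f (x + (s*c) • v) v)
      MeasureTheory.volume 0 1 := (hcont x v).intervalIntegrable _ _
  have hi2 : IntervalIntegrable (fun s : ℝ => fderiv ℝ f (y + (s*c) • u) u)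
      MeasureTheory.volume 0 1 := (hcont y u).intervalIntegrable _ _
  rw [← intervalIntegral.integral_sub hi1 hi2]
  have key : ‖∫ s in (0:ℝ)..1,
      (fderiv ℝ f (x + (s*c) • v) v - fderiv ℝ f (y + (s*c) • u) u)‖
      ≤ (B₂ * Mv * (Dxy + c * Dvu) + B₁ * Dvu) * |(1:ℝ) - 0| := by
    apply intervalIntegral.norm_integral_le_of_norm_le_const
    intro s hs
    rw [Set.uIoc_of_le (zero_le_one)] at hs
    obtain ⟨hs0, hs1⟩ := hs
    set X := x + (s*c) • v
    set Y := y + (s*c) • u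
    have hsplit : fderiv ℝ f X v - fderiv ℝ f Y u
        = (fderiv ℝ f X - fderiv ℝ f Y) v + (fderiv ℝ f Y) (v - u) := by
      simp only [ContinuousLinearMap.sub_apply, map_sub]; abel
    rw [hsplit]
    have hXY : ‖X - Y‖ ≤ Dxy + c * Dvu := by
      have e : X - Y = (x - y) + (s*c) • (v - u) := by
        simp only [X, Y, smul_sub]; abel
      rw [e]
      have h1 : ‖(s*c) • (v - u)‖ = (s*c) * ‖v - u‖ := by
        rw [norm_smul, Real.norm_eq_abs, abs_of_nonneg (mul_nonneg hs0.le hc)]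
      have h2 : s * c * ‖v - u‖ ≤ c * Dvu := by
        nlinarith [mul_le_mul_of_nonneg_right (mul_le_mul_of_nonneg_right hs1 hc)
          (norm_nonneg (v - u)), mul_le_mul_of_nonneg_left hvu hc]
      calc ‖(x - y) + (s*c) • (v - u)‖ ≤ ‖x - y‖ + ‖(s*c) • (v - u)‖ := norm_add_le _ _
        _ ≤ Dxy + c * Dvu := by rw [h1]; linarith
    have h3 : ‖(fderiv ℝ f X - fderiv ℝ f Y) v‖ ≤ B₂ * Mv * (Dxy + c * Dvu) := by
      calc ‖(fderiv ℝ f X - fderiv ℝ f Y) v‖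
          ≤ ‖fderiv ℝ f X - fderiv ℝ f Y‖ * ‖v‖ := ContinuousLinearMap.le_opNorm _ _
        _ ≤ (B₂ * ‖X - Y‖) * Mv := by
            apply mul_le_mul (hlipDf X Y) hMv (norm_nonneg _)
            exact mul_nonneg hB₂ (norm_nonneg _)
        _ ≤ B₂ * Mv * (Dxy + c * Dvu) := by
            nlinarith [mul_le_mul_of_nonneg_left hXY (mul_nonneg hB₂ hMv0)]
    have h4 : ‖(fderiv ℝ f Y) (v - u)‖ ≤ B₁ * Dvu := by
      calc ‖(fderiv ℝ f Y) (v - u)‖ ≤ ‖fderiv ℝ f Y‖ * ‖v - u‖ :=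
            ContinuousLinearMap.le_opNorm _ _
        _ ≤ B₁ * Dvu := mul_le_mul (hbd₁ Y) hvu (norm_nonneg _) hB₁
    calc ‖(fderiv ℝ f X - fderiv ℝ f Y) v + (fderiv ℝ f Y) (v - u)‖
        ≤ ‖(fderiv ℝ f X - fderiv ℝ f Y) v‖ + ‖(fderiv ℝ f Y) (v - u)‖ := norm_add_le _ _
      _ ≤ B₂ * Mv * (Dxy + c * Dvu) + B₁ * Dvu := by linarith
  simpa using key

set_option maxHeartbeats 2000000 in
set_option synthInstance.maxHeartbeats 200000 in
/-- Lemma (`T` is a contraction on `Γ(γ,δ)`): under the smallness assumptions on `h`,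
with `Q₁, Q₂, Q₃, μ` as in the paper and `Q₃ < 1`, `μ < 1`, one has
`‖Tg₁ − Tg₂‖_∞ ≤ μ ‖g₁ − g₂‖_∞` for all `g₁, g₂ ∈ Γ(γ,δ)`. -/
theorem T_contraction
    {d : ℕ} (Φ : EuclideanSpace ℝ (Fin d) → ℝ)
    (B₀ B₁ B₂ : ℝ) (hB₀ : 0 < B₀) (hB₁ : 0 < B₁) (hB₂ : 0 < B₂)
    (hΦ : ContDiff ℝ 3 Φ)
    (f : EuclideanSpace ℝ (Fin d) → EuclideanSpace ℝ (Fin d))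
    (hf : f = fun x => -gradient Φ x)
    (hbd₀ : ∀ x, ‖f x‖ ≤ B₀)
    (hbd₁ : ∀ x, ‖fderiv ℝ f x‖ ≤ B₁)
    (hbd₂ : ∀ x, ‖fderiv ℝ (fderiv ℝ f) x‖ ≤ B₂)
    (lam a h γ δ : ℝ) (hlam : lam ∈ Set.Ioo (0:ℝ) 1) (ha : 0 ≤ a)
    (hh : 0 < h) (hγ : 0 < γ) (hδ : 0 < δ)
    (lamBar K₁ K₂ K₃ Q₁ Q₂ Q₃ μ : ℝ)
    (hlamBar : lamBar = (1-lam)⁻¹)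
    (hK₁ : K₁ = lamBar*B₀ + h*γ)
    (hK₂ : K₂ = lamBar*B₁ + h*δ)
    (hK₃ : K₃ = B₀ + lam*K₁)
    (hQ₁ : Q₁ = lam*δ + a*(B₁*K₂ + B₂*K₁*(1 + h*a*K₂))
        + lamBar*((B₁ + h*B₂*K₃)*(lam*K₂ + B₁*(1 + h*a*K₂)) + B₂*K₃))
    (hQ₂ : Q₂ = h*(a*(B₁ + h*a*B₂*K₁) + lamBar*(lam + h*a*B₁)*(B₁ + h*B₂*K₃)))
    (hQ₃ : Q₃ = h*(lam*K₂ + B₁*(1 + h*a*K₂)))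
    (hμ : μ = lam + Q₂ + h^2*(lam + h*a*B₁)*Q₁/(1 - Q₃))
    (hQ₃small : Q₃ < 1) (hμsmall : μ < 1) :
    ∀ g₁ g₂ Tg₁ Tg₂ : EuclideanSpace ℝ (Fin d) → EuclideanSpace ℝ (Fin d),
      (Continuous g₁ ∧ (∀ ξ, ‖g₁ ξ‖ ≤ γ) ∧ ∀ ξ η, ‖g₁ ξ - g₁ η‖ ≤ δ * ‖ξ - η‖) →
      (Continuous g₂ ∧ (∀ ξ, ‖g₂ ξ‖ ≤ γ) ∧ ∀ ξ η, ‖g₂ ξ - g₂ η‖ ≤ δ * ‖ξ - η‖) →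
      (∀ p ξ : EuclideanSpace ℝ (Fin d), p = ξ + h • zMap f lam h a g₁ ξ →
        Tg₁ p = lam • g₁ ξ + a • I1 f lam h a g₁ ξ - lamBar • I2 f lam h a g₁ ξ) →
      (∀ p ξ : EuclideanSpace ℝ (Fin d), p = ξ + h • zMap f lam h a g₂ ξ →
        Tg₂ p = lam • g₂ ξ + a • I1 f lam h a g₂ ξ - lamBar • I2 f lam h a g₂ ξ) →
      (⨆ p : EuclideanSpace ℝ (Fin d), ‖Tg₁ p - Tg₂ p‖)
        ≤ μ * ⨆ ξ : EuclideanSpace ℝ (Fin d), ‖g₁ ξ - g₂ ξ‖ := by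
  intro g₁ g₂ Tg₁ Tg₂ hg₁ hg₂ hT₁ hT₂
  obtain ⟨hg₁c, hg₁b, hg₁l⟩ := hg₁
  obtain ⟨hg₂c, hg₂b, hg₂l⟩ := hg₂
  -- basic positivity
  have hlam0 : 0 < lam := hlam.1
  have hlam1 : lam < 1 := hlam.2
  have h1lam : 0 < 1 - lam := by linarith
  have hinv : (0:ℝ) < (1-lam)⁻¹ := inv_pos.2 h1lam
  have hlamBar0 : 0 < lamBar := by rw [hlamBar]; exact hinv
  have hK₁0 : 0 < K₁ := by
    rw [hK₁]; linarith only [mul_pos hlamBar0 hB₀, mul_pos hh hγ]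
  have hK₂0 : 0 < K₂ := by
    rw [hK₂]; linarith only [mul_pos hlamBar0 hB₁, mul_pos hh hδ]
  have hK₃0 : 0 < K₃ := by
    rw [hK₃]; linarith only [hB₀, mul_pos hlam0 hK₁0]
  have hfac0 : 0 < 1 + h*a*K₂ := by
    linarith only [mul_nonneg (mul_nonneg hh.le ha) hK₂0.le]
  set Lz : ℝ := lam*K₂ + B₁*(1 + h*a*K₂) with hLz
  have hLz0 : 0 < Lz := by
    rw [hLz]; linarith only [mul_pos hlam0 hK₂0, mul_pos hB₁ hfac0]
  have hQ₃0 : 0 < Q₃ := by rw [hQ₃]; exact mul_pos hh hLz0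
  have h1Q₃ : 0 < 1 - Q₃ := by linarith
  -- smoothness of f
  have hf2 : ContDiff ℝ 2 f := by
    rw [hf]
    have hfdΦ : ContDiff ℝ 2 (fderiv ℝ Φ) := hΦ.fderiv_right (by norm_num)
    let e := InnerProductSpace.toDual ℝ (EuclideanSpace ℝ (Fin d))
    let L : StrongDual ℝ (EuclideanSpace ℝ (Fin d)) →ₗ[ℝ] EuclideanSpace ℝ (Fin d) :=
      { toFun := fun ℓ => e.symm ℓ
        map_add' := fun ℓ₁ ℓ₂ => by simp
        map_smul' := fun r ℓ => by simpa using e.symm.map_smulₛₗ r ℓ }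
    let Lc : StrongDual ℝ (EuclideanSpace ℝ (Fin d)) →L[ℝ] EuclideanSpace ℝ (Fin d) :=
      { toLinearMap := L, cont := e.symm.continuous }
    have hc : ContDiff ℝ 2 fun x => Lc (fderiv ℝ Φ x) := Lc.contDiff.comp hfdΦ
    exact hc.neg
  have hfd : Differentiable ℝ f := hf2.differentiable (by norm_num)
  have hfd' : Differentiable ℝ (fderiv ℝ f) :=
    (hf2.fderiv_right (by norm_num) : ContDiff ℝ 1 (fderiv ℝ f)).differentiable one_ne_zero
  have hDfc : Continuous (fderiv ℝ f) := hf2.continuous_fderiv two_ne_zero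
  have hlipf : ∀ x y, ‖f x - f y‖ ≤ B₁ * ‖x - y‖ := aux_lip hfd hbd₁
  have hlipDf : ∀ x y, ‖fderiv ℝ f x - fderiv ℝ f y‖ ≤ B₂ * ‖x - y‖ := aux_lip hfd' hbd₂
  -- the sup S
  set S : ℝ := ⨆ ξ : EuclideanSpace ℝ (Fin d), ‖g₁ ξ - g₂ ξ‖ with hSdef
  have hbdd : BddAbove (Set.range fun ξ : EuclideanSpace ℝ (Fin d) => ‖g₁ ξ - g₂ ξ‖) := by
    refine ⟨γ + γ, ?_⟩
    rintro x ⟨ξ, rfl⟩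
    calc ‖g₁ ξ - g₂ ξ‖ ≤ ‖g₁ ξ‖ + ‖g₂ ξ‖ := norm_sub_le _ _
      _ ≤ γ + γ := add_le_add (hg₁b ξ) (hg₂b ξ)
  have hSle : ∀ ξ, ‖g₁ ξ - g₂ ξ‖ ≤ S := fun ξ => le_ciSup hbdd ξ
  have hS0 : 0 ≤ S := le_trans (norm_nonneg _) (hSle 0)
  -- bounds on w
  have hwbd : ∀ (g : EuclideanSpace ℝ (Fin d) → EuclideanSpace ℝ (Fin d)),
      (∀ ξ, ‖g ξ‖ ≤ γ) → ∀ ξ, ‖wMap f lam h g ξ‖ ≤ K₁ := by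
    intro g hgb ξ
    calc ‖wMap f lam h g ξ‖ ≤ ‖(1-lam)⁻¹ • f ξ‖ + ‖h • g ξ‖ := norm_add_le _ _
      _ = (1-lam)⁻¹ * ‖f ξ‖ + h * ‖g ξ‖ := by
          rw [norm_smul, norm_smul, Real.norm_eq_abs, Real.norm_eq_abs,
            abs_of_pos hinv, abs_of_pos hh]
      _ ≤ (1-lam)⁻¹ * B₀ + h * γ := add_le_add
          (mul_le_mul_of_nonneg_left (hbd₀ ξ) hinv.le)
          (mul_le_mul_of_nonneg_left (hgb ξ) hh.le)
      _ = K₁ := by rw [hK₁, hlamBar]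
  have hwlip : ∀ (g : EuclideanSpace ℝ (Fin d) → EuclideanSpace ℝ (Fin d)),
      (∀ ξ η, ‖g ξ - g η‖ ≤ δ * ‖ξ - η‖) →
      ∀ ξ η, ‖wMap f lam h g ξ - wMap f lam h g η‖ ≤ K₂ * ‖ξ - η‖ := by
    intro g hgl ξ η
    have e : wMap f lam h g ξ - wMap f lam h g η
        = (1-lam)⁻¹ • (f ξ - f η) + h • (g ξ - g η) := by
      simp only [wMap, smul_sub]; abel
    rw [e]
    calc ‖(1-lam)⁻¹ • (f ξ - f η) + h • (g ξ - g η)‖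
        ≤ ‖(1-lam)⁻¹ • (f ξ - f η)‖ + ‖h • (g ξ - g η)‖ := norm_add_le _ _
      _ = (1-lam)⁻¹ * ‖f ξ - f η‖ + h * ‖g ξ - g η‖ := by
          rw [norm_smul, norm_smul, Real.norm_eq_abs, Real.norm_eq_abs,
            abs_of_pos hinv, abs_of_pos hh]
      _ ≤ (1-lam)⁻¹ * (B₁ * ‖ξ - η‖) + h * (δ * ‖ξ - η‖) := add_le_add
          (mul_le_mul_of_nonneg_left (hlipf ξ η) hinv.le)
          (mul_le_mul_of_nonneg_left (hgl ξ η) hh.le)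
      _ = K₂ * ‖ξ - η‖ := by rw [hK₂, hlamBar]; ring
  -- bounds on z
  have hzbd : ∀ (g : EuclideanSpace ℝ (Fin d) → EuclideanSpace ℝ (Fin d)),
      (∀ ξ, ‖g ξ‖ ≤ γ) → ∀ ξ, ‖zMap f lam h a g ξ‖ ≤ K₃ := by
    intro g hgb ξ
    calc ‖zMap f lam h a g ξ‖
        ≤ ‖lam • wMap f lam h g ξ‖ + ‖f (ξ + (h*a) • wMap f lam h g ξ)‖ := norm_add_le _ _
      _ = lam * ‖wMap f lam h g ξ‖ + ‖f (ξ + (h*a) • wMap f lam h g ξ)‖ := by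
          rw [norm_smul, Real.norm_eq_abs, abs_of_pos hlam0]
      _ ≤ lam * K₁ + B₀ := add_le_add
          (mul_le_mul_of_nonneg_left (hwbd g hgb ξ) hlam0.le) (hbd₀ _)
      _ = K₃ := by rw [hK₃]; ring
  have hzlip : ∀ (g : EuclideanSpace ℝ (Fin d) → EuclideanSpace ℝ (Fin d)),
      (∀ ξ η, ‖g ξ - g η‖ ≤ δ * ‖ξ - η‖) →
      ∀ ξ η, ‖zMap f lam h a g ξ - zMap f lam h a g η‖ ≤ Lz * ‖ξ - η‖ := by
    intro g hgl ξ η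
    have e : zMap f lam h a g ξ - zMap f lam h a g η
        = lam • (wMap f lam h g ξ - wMap f lam h g η)
          + (f (ξ + (h*a) • wMap f lam h g ξ) - f (η + (h*a) • wMap f lam h g η)) := by
      simp only [zMap, smul_sub]; abel
    rw [e]
    have hw := hwlip g hgl ξ η
    have harg : ‖(ξ + (h*a) • wMap f lam h g ξ) - (η + (h*a) • wMap f lam h g η)‖
        ≤ (1 + h*a*K₂) * ‖ξ - η‖ := by
      have e2 : (ξ + (h*a) • wMap f lam h g ξ) - (η + (h*a) • wMap f lam h g η)
          = (ξ - η) + (h*a) • (wMap f lam h g ξ - wMap f lam h g η) := by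
        rw [smul_sub]; abel
      rw [e2]
      calc ‖(ξ - η) + (h*a) • (wMap f lam h g ξ - wMap f lam h g η)‖
          ≤ ‖ξ - η‖ + ‖(h*a) • (wMap f lam h g ξ - wMap f lam h g η)‖ := norm_add_le _ _
        _ = ‖ξ - η‖ + (h*a) * ‖wMap f lam h g ξ - wMap f lam h g η‖ := by
            rw [norm_smul, Real.norm_eq_abs, abs_of_nonneg (mul_nonneg hh.le ha)]
        _ ≤ (1 + h*a*K₂) * ‖ξ - η‖ := by
            linarith only [mul_le_mul_of_nonneg_left hw (mul_nonneg hh.le ha)]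
    calc ‖lam • (wMap f lam h g ξ - wMap f lam h g η)
          + (f (ξ + (h*a) • wMap f lam h g ξ) - f (η + (h*a) • wMap f lam h g η))‖
        ≤ ‖lam • (wMap f lam h g ξ - wMap f lam h g η)‖
          + ‖f (ξ + (h*a) • wMap f lam h g ξ) - f (η + (h*a) • wMap f lam h g η)‖ :=
          norm_add_le _ _
      _ = lam * ‖wMap f lam h g ξ - wMap f lam h g η‖
          + ‖f (ξ + (h*a) • wMap f lam h g ξ) - f (η + (h*a) • wMap f lam h g η)‖ := by
          rw [norm_smul, Real.norm_eq_abs, abs_of_pos hlam0]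
      _ ≤ lam * (K₂ * ‖ξ - η‖) + B₁ * ((1 + h*a*K₂) * ‖ξ - η‖) := add_le_add
          (mul_le_mul_of_nonneg_left hw hlam0.le)
          ((hlipf _ _).trans (mul_le_mul_of_nonneg_left harg hB₁.le))
      _ = Lz * ‖ξ - η‖ := by rw [hLz]; ring
  -- cross bounds (g₁ vs g₂ at the same point)
  have hwcross : ∀ ξ, ‖wMap f lam h g₁ ξ - wMap f lam h g₂ ξ‖ ≤ h * S := by
    intro ξ
    have e : wMap f lam h g₁ ξ - wMap f lam h g₂ ξ = h • (g₁ ξ - g₂ ξ) := by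
      simp only [wMap, smul_sub]; abel
    rw [e, norm_smul, Real.norm_eq_abs, abs_of_pos hh]
    exact mul_le_mul_of_nonneg_left (hSle ξ) hh.le
  have hzcross : ∀ ξ, ‖zMap f lam h a g₁ ξ - zMap f lam h a g₂ ξ‖ ≤ (lam + h*a*B₁) * (h*S) := by
    intro ξ
    have e : zMap f lam h a g₁ ξ - zMap f lam h a g₂ ξ
        = lam • (wMap f lam h g₁ ξ - wMap f lam h g₂ ξ)
          + (f (ξ + (h*a) • wMap f lam h g₁ ξ) - f (ξ + (h*a) • wMap f lam h g₂ ξ)) := by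
      simp only [zMap, smul_sub]; abel
    rw [e]
    have hw := hwcross ξ
    have harg : ‖(ξ + (h*a) • wMap f lam h g₁ ξ) - (ξ + (h*a) • wMap f lam h g₂ ξ)‖
        ≤ (h*a) * (h*S) := by
      have e2 : (ξ + (h*a) • wMap f lam h g₁ ξ) - (ξ + (h*a) • wMap f lam h g₂ ξ)
          = (h*a) • (wMap f lam h g₁ ξ - wMap f lam h g₂ ξ) := by rw [smul_sub]; abel
      rw [e2, norm_smul, Real.norm_eq_abs, abs_of_nonneg (mul_nonneg hh.le ha)]
      exact mul_le_mul_of_nonneg_left hw (mul_nonneg hh.le ha)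
    calc ‖lam • (wMap f lam h g₁ ξ - wMap f lam h g₂ ξ)
          + (f (ξ + (h*a) • wMap f lam h g₁ ξ) - f (ξ + (h*a) • wMap f lam h g₂ ξ))‖
        ≤ ‖lam • (wMap f lam h g₁ ξ - wMap f lam h g₂ ξ)‖
          + ‖f (ξ + (h*a) • wMap f lam h g₁ ξ) - f (ξ + (h*a) • wMap f lam h g₂ ξ)‖ :=
          norm_add_le _ _
      _ = lam * ‖wMap f lam h g₁ ξ - wMap f lam h g₂ ξ‖
          + ‖f (ξ + (h*a) • wMap f lam h g₁ ξ) - f (ξ + (h*a) • wMap f lam h g₂ ξ)‖ := by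
          rw [norm_smul, Real.norm_eq_abs, abs_of_pos hlam0]
      _ ≤ lam * (h*S) + B₁ * ((h*a) * (h*S)) := add_le_add
          (mul_le_mul_of_nonneg_left hw hlam0.le)
          ((hlipf _ _).trans (mul_le_mul_of_nonneg_left harg hB₁.le))
      _ = (lam + h*a*B₁) * (h*S) := by ring
  -- existence of preimages via the Banach fixed point theorem
  have hexists : ∀ (g : EuclideanSpace ℝ (Fin d) → EuclideanSpace ℝ (Fin d)),
      (∀ ξ η, ‖g ξ - g η‖ ≤ δ * ‖ξ - η‖) →
      ∀ p : EuclideanSpace ℝ (Fin d), ∃ ξ, p = ξ + h • zMap f lam h a g ξ := by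
    intro g hgl p
    have hlip : LipschitzWith Q₃.toNNReal (fun ξ => p - h • zMap f lam h a g ξ) := by
      apply LipschitzWith.of_dist_le_mul
      intro ξ η
      rw [dist_eq_norm, dist_eq_norm, Real.coe_toNNReal _ hQ₃0.le]
      have e : (p - h • zMap f lam h a g ξ) - (p - h • zMap f lam h a g η)
          = h • (zMap f lam h a g η - zMap f lam h a g ξ) := by rw [smul_sub]; abel
      rw [e, norm_smul, Real.norm_eq_abs, abs_of_pos hh, hQ₃, norm_sub_rev ξ η]
      linarith only [mul_le_mul_of_nonneg_left (hzlip g hgl η ξ) hh.le]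
    have hcontr : ContractingWith Q₃.toNNReal (fun ξ => p - h • zMap f lam h a g ξ) := by
      constructor
      · have h1 : Q₃.toNNReal < (1:ℝ).toNNReal := (Real.toNNReal_lt_toNNReal_iff one_pos).2 hQ₃small
        simpa using h1
      · exact hlip
    obtain ⟨ξ, hξ, -, -⟩ := hcontr.exists_fixedPoint 0 (edist_ne_top _ _)
    refine ⟨ξ, ?_⟩
    have hfix : p - h • zMap f lam h a g ξ = ξ := hξ
    exact sub_eq_iff_eq_add.mp hfix
  -- main pointwise estimate
  refine ciSup_le fun p => ?_
  obtain ⟨ξ₁, hp₁⟩ := hexists g₁ hg₁l p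
  obtain ⟨ξ₂, hp₂⟩ := hexists g₂ hg₂l p
  set D : ℝ := ‖ξ₁ - ξ₂‖ with hDdef
  have hD0 : 0 ≤ D := norm_nonneg _
  -- bound on D
  have hD : D ≤ h^2 * (lam + h*a*B₁) * S / (1 - Q₃) := by
    have h' : ξ₁ + h • zMap f lam h a g₁ ξ₁ = ξ₂ + h • zMap f lam h a g₂ ξ₂ :=
      hp₁.symm.trans hp₂
    have e : ξ₁ - ξ₂ = h • zMap f lam h a g₂ ξ₂ - h • zMap f lam h a g₁ ξ₁ := by
      rw [sub_eq_sub_iff_add_eq_add, h']; abel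
    have hrec : D ≤ Q₃ * D + h^2 * (lam + h*a*B₁) * S := by
      have e2 : ξ₁ - ξ₂ = h • (zMap f lam h a g₂ ξ₂ - zMap f lam h a g₁ ξ₁) := by
        rw [smul_sub]; exact e
      have h3 : ‖zMap f lam h a g₂ ξ₂ - zMap f lam h a g₁ ξ₁‖
          ≤ Lz * D + (lam + h*a*B₁) * (h*S) := by
        have e3 : zMap f lam h a g₂ ξ₂ - zMap f lam h a g₁ ξ₁
            = (zMap f lam h a g₂ ξ₂ - zMap f lam h a g₂ ξ₁)
              + (zMap f lam h a g₂ ξ₁ - zMap f lam h a g₁ ξ₁) := by abel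
        rw [e3]
        have t1 : ‖zMap f lam h a g₂ ξ₂ - zMap f lam h a g₂ ξ₁‖ ≤ Lz * D := by
          have t := hzlip g₂ hg₂l ξ₂ ξ₁
          rwa [norm_sub_rev ξ₂ ξ₁, ← hDdef] at t
        have t2 : ‖zMap f lam h a g₂ ξ₁ - zMap f lam h a g₁ ξ₁‖ ≤ (lam + h*a*B₁) * (h*S) := by
          have t := hzcross ξ₁
          rwa [norm_sub_rev] at t
        exact (norm_add_le _ _).trans (add_le_add t1 t2)
      have e4 : D = h * ‖zMap f lam h a g₂ ξ₂ - zMap f lam h a g₁ ξ₁‖ := by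
        rw [hDdef, e2, norm_smul, Real.norm_eq_abs, abs_of_pos hh]
      rw [hQ₃]
      linarith only [mul_le_mul_of_nonneg_left h3 hh.le, e4]
    rw [le_div_iff₀ h1Q₃]
    linarith only [hrec]
  -- bound on the g-difference
  have hgΔ : ‖g₁ ξ₁ - g₂ ξ₂‖ ≤ S + δ * D := by
    have e : g₁ ξ₁ - g₂ ξ₂ = (g₁ ξ₁ - g₂ ξ₁) + (g₂ ξ₁ - g₂ ξ₂) := by abel
    rw [e]
    refine (norm_add_le _ _).trans (add_le_add (hSle ξ₁) ?_)
    rw [hDdef]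
    exact hg₂l ξ₁ ξ₂
  -- bounds on the I1-difference
  have hI1cross : ‖I1 f lam h a g₁ ξ₁ - I1 f lam h a g₂ ξ₁‖
      ≤ B₂*K₁*(0 + (h*a)*(h*S)) + B₁*(h*S) := by
    simp only [I1]
    exact aux_integral_bound f hDfc hbd₁ hlipDf hB₂.le (mul_nonneg hh.le ha) ξ₁ ξ₁ _ _
      (hwbd g₁ hg₁b ξ₁) hK₁0.le (by simp) (hwcross ξ₁)
  have hI1lip : ‖I1 f lam h a g₂ ξ₁ - I1 f lam h a g₂ ξ₂‖
      ≤ B₂*K₁*(D + (h*a)*(K₂*D)) + B₁*(K₂*D) := by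
    simp only [I1]
    refine aux_integral_bound f hDfc hbd₁ hlipDf hB₂.le (mul_nonneg hh.le ha) ξ₁ ξ₂ _ _
      (hwbd g₂ hg₂b ξ₁) hK₁0.le hDdef.ge ?_
    rw [hDdef]
    exact hwlip g₂ hg₂l ξ₁ ξ₂
  have hI1Δ : ‖I1 f lam h a g₁ ξ₁ - I1 f lam h a g₂ ξ₂‖
      ≤ (B₂*K₁*(0 + (h*a)*(h*S)) + B₁*(h*S)) + (B₂*K₁*(D + (h*a)*(K₂*D)) + B₁*(K₂*D)) := by
    have e : I1 f lam h a g₁ ξ₁ - I1 f lam h a g₂ ξ₂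
        = (I1 f lam h a g₁ ξ₁ - I1 f lam h a g₂ ξ₁)
          + (I1 f lam h a g₂ ξ₁ - I1 f lam h a g₂ ξ₂) := by abel
    rw [e]
    exact (norm_add_le _ _).trans (add_le_add hI1cross hI1lip)
  -- bounds on the I2-difference
  have hI2cross : ‖I2 f lam h a g₁ ξ₁ - I2 f lam h a g₂ ξ₁‖
      ≤ B₂*K₃*(0 + h*((lam + h*a*B₁)*(h*S))) + B₁*((lam + h*a*B₁)*(h*S)) := by
    simp only [I2]
    exact aux_integral_bound f hDfc hbd₁ hlipDf hB₂.le hh.le ξ₁ ξ₁ _ _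
      (hzbd g₁ hg₁b ξ₁) hK₃0.le (by simp) (hzcross ξ₁)
  have hI2lip : ‖I2 f lam h a g₂ ξ₁ - I2 f lam h a g₂ ξ₂‖
      ≤ B₂*K₃*(D + h*(Lz*D)) + B₁*(Lz*D) := by
    simp only [I2]
    refine aux_integral_bound f hDfc hbd₁ hlipDf hB₂.le hh.le ξ₁ ξ₂ _ _
      (hzbd g₂ hg₂b ξ₁) hK₃0.le hDdef.ge ?_
    rw [hDdef]
    exact hzlip g₂ hg₂l ξ₁ ξ₂
  have hI2Δ : ‖I2 f lam h a g₁ ξ₁ - I2 f lam h a g₂ ξ₂‖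
      ≤ (B₂*K₃*(0 + h*((lam + h*a*B₁)*(h*S))) + B₁*((lam + h*a*B₁)*(h*S)))
        + (B₂*K₃*(D + h*(Lz*D)) + B₁*(Lz*D)) := by
    have e : I2 f lam h a g₁ ξ₁ - I2 f lam h a g₂ ξ₂
        = (I2 f lam h a g₁ ξ₁ - I2 f lam h a g₂ ξ₁)
          + (I2 f lam h a g₂ ξ₁ - I2 f lam h a g₂ ξ₂) := by abel
    rw [e]
    exact (norm_add_le _ _).trans (add_le_add hI2cross hI2lip)
  -- assembling the pointwise bound
  have hTdiff : Tg₁ p - Tg₂ p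
      = lam • (g₁ ξ₁ - g₂ ξ₂) + a • (I1 f lam h a g₁ ξ₁ - I1 f lam h a g₂ ξ₂)
        - lamBar • (I2 f lam h a g₁ ξ₁ - I2 f lam h a g₂ ξ₂) := by
    rw [hT₁ p ξ₁ hp₁, hT₂ p ξ₂ hp₂]
    module
  have hmain : ‖Tg₁ p - Tg₂ p‖
      ≤ lam * (S + δ*D)
        + a * ((B₂*K₁*(0 + (h*a)*(h*S)) + B₁*(h*S)) + (B₂*K₁*(D + (h*a)*(K₂*D)) + B₁*(K₂*D)))
        + lamBar * ((B₂*K₃*(0 + h*((lam + h*a*B₁)*(h*S))) + B₁*((lam + h*a*B₁)*(h*S)))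
          + (B₂*K₃*(D + h*(Lz*D)) + B₁*(Lz*D))) := by
    rw [hTdiff]
    have t0 : ‖lam • (g₁ ξ₁ - g₂ ξ₂) + a • (I1 f lam h a g₁ ξ₁ - I1 f lam h a g₂ ξ₂)
        - lamBar • (I2 f lam h a g₁ ξ₁ - I2 f lam h a g₂ ξ₂)‖
        ≤ ‖lam • (g₁ ξ₁ - g₂ ξ₂)‖ + ‖a • (I1 f lam h a g₁ ξ₁ - I1 f lam h a g₂ ξ₂)‖
          + ‖lamBar • (I2 f lam h a g₁ ξ₁ - I2 f lam h a g₂ ξ₂)‖ := by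
      refine (norm_sub_le _ _).trans ?_
      have t := norm_add_le (lam • (g₁ ξ₁ - g₂ ξ₂))
        (a • (I1 f lam h a g₁ ξ₁ - I1 f lam h a g₂ ξ₂))
      linarith
    refine t0.trans ?_
    rw [norm_smul, norm_smul, norm_smul, Real.norm_eq_abs, Real.norm_eq_abs, Real.norm_eq_abs,
      abs_of_pos hlam0, abs_of_nonneg ha, abs_of_pos hlamBar0]
    exact add_le_add (add_le_add (mul_le_mul_of_nonneg_left hgΔ hlam0.le)
      (mul_le_mul_of_nonneg_left hI1Δ ha)) (mul_le_mul_of_nonneg_left hI2Δ hlamBar0.le)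
  have heq : lam * (S + δ*D)
        + a * ((B₂*K₁*(0 + (h*a)*(h*S)) + B₁*(h*S)) + (B₂*K₁*(D + (h*a)*(K₂*D)) + B₁*(K₂*D)))
        + lamBar * ((B₂*K₃*(0 + h*((lam + h*a*B₁)*(h*S))) + B₁*((lam + h*a*B₁)*(h*S)))
          + (B₂*K₃*(D + h*(Lz*D)) + B₁*(Lz*D)))
      = (lam + Q₂)*S + Q₁*D := by
    rw [hQ₁, hQ₂, hLz]
    ring
  have hQ₁0 : 0 ≤ Q₁ := by
    rw [hQ₁, hLz]
    have t1 : 0 ≤ B₁*K₂ + B₂*K₁*(1 + h*a*K₂) := by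
      linarith only [mul_pos hB₁ hK₂0, mul_pos (mul_pos hB₂ hK₁0) hfac0]
    have t2 : 0 ≤ (B₁ + h*B₂*K₃) := by
      linarith only [hB₁, mul_pos (mul_pos hh hB₂) hK₃0]
    have t3 : 0 ≤ lam*K₂ + B₁*(1 + h*a*K₂) := by
      linarith only [mul_pos hlam0 hK₂0, mul_pos hB₁ hfac0]
    have t4 : 0 ≤ (B₁ + h*B₂*K₃)*(lam*K₂ + B₁*(1 + h*a*K₂)) + B₂*K₃ := by
      linarith only [mul_nonneg t2 t3, mul_pos hB₂ hK₃0]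
    linarith only [mul_pos hlam0 hδ, mul_nonneg ha t1, mul_nonneg hlamBar0.le t4]
  have hne : (1:ℝ) - Q₃ ≠ 0 := h1Q₃.ne'
  calc ‖Tg₁ p - Tg₂ p‖ ≤ (lam + Q₂)*S + Q₁*D := hmain.trans heq.le
    _ ≤ (lam + Q₂)*S + Q₁*(h^2 * (lam + h*a*B₁) * S / (1 - Q₃)) := by
        linarith only [mul_le_mul_of_nonneg_left hD hQ₁0]
    _ = μ * S := by
        rw [hμ]
        field_simp
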